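/- Let M be a finitely presented right R-module. Then the canonical map M ⊗_R R⟪x₁,…,xₙ⟫ → M⟪x₁,…,xₙ⟫, sending an elementary tensor m ⊗ Σ_{a∈ℤⁿ} r_a x^a to the family (m·r_a)_{a∈ℤⁿ}, is an isomorphism of R⟪x₁,…,xₙ⟫-modules (in particular, it is bijective). -/

import Mathlib

open scoped TensorProduct

set_option synthInstance.maxHeartbeats 1000000
set_option maxHeartbeats 1600000

variable (R : Type) [CommRing R] (n : ℕ)

/-- The Novikov ring `R⟪x₁,…,xₙ⟫`: formal series `Σ_{a∈ℤⁿ} r_a x^a` whose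
support satisfies `m·(1,…,1) + supp(f) ⊆ ℕⁿ` for some `m ∈ ℕ`, with
convolution product (realised as a subalgebra of the Hahn series ring over the
partially ordered group `ℤⁿ`). -/
noncomputable def NovikovRing : Subalgebra R (HahnSeries (Fin n → ℤ) R) where
  carrier := {f | ∃ m : ℕ, ∀ a ∈ f.support, ∀ i, -(m : ℤ) ≤ a i}
  mul_mem' := by
    rintro f g ⟨m1, h1⟩ ⟨m2, h2⟩
    refine ⟨m1 + m2, fun a ha i => ?_⟩
    obtain ⟨x, hx, y, hy, rfl⟩ := HahnSeries.support_mul_subset ha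
    have := h1 x hx i
    have := h2 y hy i
    have : (x + y) i = x i + y i := rfl
    push_cast
    omega
  one_mem' := by
    refine ⟨0, fun a ha i => ?_⟩
    have h0 : a = 0 := by
      by_contra hne
      exact ha (by simp [HahnSeries.coeff_one, hne, HahnSeries.mem_support])
    simp [h0]
  add_mem' := by
    rintro f g ⟨m1, h1⟩ ⟨m2, h2⟩
    refine ⟨max m1 m2, fun a ha i => ?_⟩
    rcases HahnSeries.support_add_subset _ _ ha with h | h
    · have := h1 a h i; push_cast; omega
    · have := h2 a h i; push_cast; omega
  zero_mem' := ⟨0, by simp⟩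
  algebraMap_mem' := by
    intro r
    refine ⟨0, fun a ha i => ?_⟩
    have h0 : a = 0 := by
      have := HahnSeries.support_single_subset (a := (0 : Fin n → ℤ)) (r := r) ha
      simpa using this
    simp [h0]

variable (M : Type) [AddCommGroup M] [Module R M]

/-- The truncated power `M⟪x₁,…,xₙ⟫`: families `(m_a)_{a∈ℤⁿ} ∈ ∏_{ℤⁿ} M` whose
support satisfies `m·(1,…,1) + supp ⊆ ℕⁿ` for some `m ∈ ℕ`, as a module over
the Novikov ring `R⟪x₁,…,xₙ⟫` (with convolution action). -/
noncomputable def TruncPower :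
    Submodule (NovikovRing R n) (HahnModule (Fin n → ℤ) R M) where
  carrier := {g | ∃ m : ℕ, ∀ a ∈ ((HahnModule.of R).symm g).support, ∀ i, -(m : ℤ) ≤ a i}
  add_mem' := by
    rintro f g ⟨m1, h1⟩ ⟨m2, h2⟩
    refine ⟨max m1 m2, fun a ha i => ?_⟩
    rw [HahnModule.of_symm_add] at ha
    rcases HahnSeries.support_add_subset _ _ ha with h | h
    · have := h1 a h i; push_cast; omega
    · have := h2 a h i; push_cast; omega
  zero_mem' := ⟨0, by simp⟩
  smul_mem' := by
    rintro c g ⟨m2, h2⟩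
    obtain ⟨m1, h1⟩ := c.2
    refine ⟨m1 + m2, fun a ha i => ?_⟩
    have hsub := HahnModule.support_smul_subset_vadd_support
      (x := (c : HahnSeries (Fin n → ℤ) R)) (y := g)
    obtain ⟨x, hx, y, hy, rfl⟩ := hsub ha
    have := h1 x hx i
    have := h2 y hy i
    have hxy : (x +ᵥ y) i = x i + y i := rfl
    push_cast
    omega

/-- The Hahn series with coefficients `f_a • m` for a fixed `m`. -/
noncomputable def smulSeries (m : M) (f : HahnSeries (Fin n → ℤ) R) :
    HahnSeries (Fin n → ℤ) M where
  coeff := fun a => f.coeff a • m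
  isPWO_support' := f.isPWO_support'.mono (by
    intro a ha
    simp only [Function.mem_support] at ha ⊢
    intro h0
    exact ha (by rw [h0, zero_smul]))

/-- The canonical map `M ⊗_R R⟪x₁,…,xₙ⟫ → M⟪x₁,…,xₙ⟫ ⊆ ∏_{ℤⁿ} M`, sending an
elementary tensor `m ⊗ Σ_{a∈ℤⁿ} r_a x^a` to the family `(r_a • m)_{a∈ℤⁿ}`. -/
noncomputable def canonMap :
    M ⊗[R] (NovikovRing R n) →ₗ[R] HahnModule (Fin n → ℤ) R M :=
  TensorProduct.lift
    { toFun := fun m =>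
        { toFun := fun f => (HahnModule.of R) (smulSeries R n M m f.1)
          map_add' := by
            intro f g
            apply HahnModule.ext
            funext a
            show (f.1 + g.1).coeff a • m = _
            rw [HahnSeries.coeff_add, add_smul]
            rfl
          map_smul' := by
            intro r f
            apply HahnModule.ext
            funext a
            show (r • f.1).coeff a • m = _
            rw [HahnSeries.coeff_smul, smul_assoc]
            rfl }
      map_add' := by
        intro m m'
        apply LinearMap.ext
        intro f
        apply HahnModule.ext
        funext a
        show f.1.coeff a • (m + m') = _
        rw [smul_add]
        rfl
      map_smul' := by
        intro r m
        apply LinearMap.ext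
        intro f
        apply HahnModule.ext
        funext a
        show f.1.coeff a • (r • m) = _
        rw [smul_comm]
        rfl }

/-! The map lands in the truncated families, and for finitely generated `M` it hits all of them:
expanding every coefficient in a finite generating set `v₁, …, v_k` writes a truncated family as
`∑ vᵢ ⊗ Fᵢ`, where each Novikov series `Fᵢ` inherits the support bound. For a free module
`R^(ι)` both sides are `ι`-indexed families of Novikov series, so the map is injective. For
`M = R^k / K` with `K` finitely generated, an element of the kernel lifts to
`w ∈ R^k ⊗ R⟪x⟫` whose image has all coefficients in `K`; by surjectivity for `K` this image
comes from `K ⊗ R⟪x⟫`, by injectivity for `R^k` so does `w`, and so `w` dies in `M ⊗ R⟪x⟫`. -/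

theorem HahnModule.coeff_of_symm_sum {Γ S V ι : Type*} [PartialOrder Γ] [AddCommMonoid V]
    [SMul S V] (s : Finset ι) (g : ι → HahnModule Γ S V) (a : Γ) :
    ((HahnModule.of S).symm (∑ i ∈ s, g i)).coeff a
      = ∑ i ∈ s, ((HahnModule.of S).symm (g i)).coeff a :=
  HahnSeries.coeff_sum a

section

variable {R n}
variable {N P : Type} [AddCommGroup N] [Module R N] [AddCommGroup P] [Module R P]

@[simp]
theorem coeff_canonMap_tmul (m : N) (f : NovikovRing R n) (a : Fin n → ℤ) :
    ((HahnModule.of R).symm (canonMap R n N (m ⊗ₜ[R] f))).coeff a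
      = (f : HahnSeries (Fin n → ℤ) R).coeff a • m := rfl

theorem coeff_canonMap_rTensor (φ : N →ₗ[R] P) (z : N ⊗[R] NovikovRing R n) (a : Fin n → ℤ) :
    ((HahnModule.of R).symm (canonMap R n P (φ.rTensor _ z))).coeff a
      = φ (((HahnModule.of R).symm (canonMap R n N z)).coeff a) := by
  induction z using TensorProduct.induction_on with
  | zero => simp
  | tmul m f => simp
  | add x y hx hy => simp [hx, hy]

theorem canonMap_mem_truncPower (z : N ⊗[R] NovikovRing R n) :
    canonMap R n N z ∈ TruncPower R n N := by
  induction z using TensorProduct.induction_on with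
  | zero => simp [(TruncPower R n N).zero_mem]
  | tmul m f =>
      obtain ⟨k, hk⟩ := f.2
      exact ⟨k, fun a ha => hk a fun h => ha (by simp [h])⟩
  | add x y hx hy => simpa using (TruncPower R n N).add_mem hx hy

theorem coeff_canonMap_finsupp {ι : Type} [DecidableEq ι] (z : (ι →₀ R) ⊗[R] NovikovRing R n)
    (a : Fin n → ℤ) (i : ι) :
    ((HahnModule.of R).symm (canonMap R n (ι →₀ R) z)).coeff a i
      = (TensorProduct.finsuppScalarLeft R (NovikovRing R n) ι z i :
          HahnSeries (Fin n → ℤ) R).coeff a := by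
  induction z using TensorProduct.induction_on with
  | zero => simp
  | tmul p f => simp [TensorProduct.finsuppScalarLeft_apply_tmul_apply, mul_comm]
  | add x y hx hy => simp [hx, hy]

theorem canonMap_finsupp_injective (ι : Type) [DecidableEq ι] :
    Function.Injective (canonMap R n (ι →₀ R)) := by
  intro x y hxy
  apply (TensorProduct.finsuppScalarLeft R (NovikovRing R n) ι).injective
  ext i a
  rw [← coeff_canonMap_finsupp, ← coeff_canonMap_finsupp, hxy]

theorem exists_canonMap_rTensor_eq [Module.Finite R N] (φ : N →ₗ[R] P)
    {g : HahnModule (Fin n → ℤ) R P} (hg : g ∈ TruncPower R n P)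
    (hφ : ∀ a, ((HahnModule.of R).symm g).coeff a ∈ LinearMap.range φ) :
    ∃ z : N ⊗[R] NovikovRing R n, canonMap R n P (φ.rTensor _ z) = g := by
  classical
  obtain ⟨k, v, hv⟩ := Module.Finite.exists_fin (R := R) (M := N)
  set G := (HahnModule.of R).symm g
  -- Expanding vanishing coefficients as zero keeps the series `F i` below truncated.
  have hexp : ∀ a, ∃ c : Fin k → R,
      (G.coeff a = 0 → c = 0) ∧ ∑ i, c i • φ (v i) = G.coeff a := by
    intro a
    by_cases h0 : G.coeff a = 0
    · exact ⟨0, fun _ => rfl, by simp [h0]⟩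
    obtain ⟨x, hx⟩ := hφ a
    have hx_span : x ∈ Submodule.span R (Set.range v) := by simp [hv]
    obtain ⟨c, hc⟩ := (Submodule.mem_span_range_iff_exists_fun R).mp hx_span
    exact ⟨c, fun h => absurd h h0, by simp [← hx, ← hc, map_sum]⟩
  choose c hc0 hc using hexp
  have hsupp : ∀ i, (Function.support fun a => c a i) ⊆ G.support := fun i a ha h0 =>
    ha (by simp [hc0 a h0])
  let F : Fin k → NovikovRing R n := fun i =>
    ⟨⟨fun a => c a i, G.isPWO_support.mono (hsupp i)⟩,
      by obtain ⟨m, hm⟩ := hg; exact ⟨m, fun a ha => hm a (hsupp i ha)⟩⟩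
  refine ⟨∑ i, v i ⊗ₜ[R] F i, ?_⟩
  ext a
  simp [map_sum, HahnModule.coeff_of_symm_sum, F, hc, G]

theorem range_canonMap [Module.Finite R N] :
    Set.range (canonMap R n N) = (TruncPower R n N : Set (HahnModule (Fin n → ℤ) R N)) := by
  refine subset_antisymm (Set.range_subset_iff.mpr canonMap_mem_truncPower) fun g hg => ?_
  obtain ⟨z, hz⟩ := exists_canonMap_rTensor_eq LinearMap.id hg (fun a => ⟨_, rfl⟩)
  exact ⟨z, by simpa using hz⟩

theorem canonMap_injective [Module.FinitePresentation R N] :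
    Function.Injective (canonMap R n N) := by
  obtain ⟨k, v, hv⟩ := Module.Finite.exists_fin (R := R) (M := N)
  set π := Finsupp.linearCombination R v
  have hπ : Function.Surjective π :=
    LinearMap.range_eq_top.mp (by rw [Finsupp.range_linearCombination, hv])
  have : Module.Finite R (LinearMap.ker π) :=
    Module.Finite.iff_fg.mpr (Module.FinitePresentation.fg_ker π hπ)
  rw [← LinearMap.ker_eq_bot, LinearMap.ker_eq_bot']
  intro z hz
  obtain ⟨w, rfl⟩ := LinearMap.rTensor_surjective (NovikovRing R n) hπ z
  obtain ⟨u, hu⟩ := exists_canonMap_rTensor_eq (N := LinearMap.ker π) (LinearMap.ker π).subtype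
    (canonMap_mem_truncPower w) fun a => by
      rw [Submodule.range_subtype, LinearMap.mem_ker, ← coeff_canonMap_rTensor, hz]
      rfl
  rw [← canonMap_finsupp_injective (Fin k) hu, ← LinearMap.comp_apply, ← LinearMap.rTensor_comp,
    LinearMap.comp_ker_subtype, LinearMap.rTensor_zero, LinearMap.zero_apply]

theorem canonMap_tmul_mul (f g : NovikovRing R n) (m : N) :
    canonMap R n N (m ⊗ₜ[R] (g * f)) =
      (f : HahnSeries (Fin n → ℤ) R) • canonMap R n N (m ⊗ₜ[R] g) := by
  have hsupp : ((HahnModule.of R).symm (canonMap R n N (m ⊗ₜ[R] g))).support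
      ⊆ (g : HahnSeries (Fin n → ℤ) R).support := fun b hb h0 => hb (by simp [h0])
  ext a
  rw [HahnModule.coeff_smul_right (g : HahnSeries (Fin n → ℤ) R).isPWO_support hsupp,
    coeff_canonMap_tmul, MulMemClass.coe_mul, mul_comm,
    HahnSeries.coeff_mul_right' (g : HahnSeries (Fin n → ℤ) R).isPWO_support subset_rfl,
    Finset.sum_smul]
  exact Finset.sum_congr rfl fun ij _ => by simp [mul_smul]

end

/-- Let `M` be a finitely presented `R`-module. Then the
canonical map `M ⊗_R R⟪x₁,…,xₙ⟫ → M⟪x₁,…,xₙ⟫`, sending `m ⊗ Σ r_a x^a` to the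
family `(r_a • m)_{a∈ℤⁿ}`, is an isomorphism of `R⟪x₁,…,xₙ⟫`-modules: it is
injective, its image is exactly the truncated power `M⟪x₁,…,xₙ⟫`, and it
intertwines the `R⟪x₁,…,xₙ⟫`-scalar actions. -/
theorem canonMap_bijective (hM : Module.FinitePresentation R M) :
    Function.Injective (canonMap R n M) ∧
      Set.range (canonMap R n M) = (TruncPower R n M : Set (HahnModule (Fin n → ℤ) R M)) ∧
      ∀ (f g : NovikovRing R n) (m : M),
        canonMap R n M (m ⊗ₜ[R] (g * f)) =
          (f : HahnSeries (Fin n → ℤ) R) • canonMap R n M (m ⊗ₜ[R] g) :=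
  ⟨canonMap_injective, range_canonMap, canonMap_tmul_mul⟩
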